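/- arXiv:math/0504288 — 3 statements merged into one kernel-verified Lean document; each statement's English description precedes it below -/
import Mathlib

section
/- Define s₁(x,y,t) = 2 sinh(w)/cosh²(w) cos t, s₂(x,y,t) = 2 sinh(w)/cosh²(w) sin t, s₃(x,y,t) = 1 − 2/cosh²(w), where w = cos δ · x + sin δ · y for a fixed real parameter δ. Then s = (s₁,s₂,s₃) satisfies s₁²+s₂²+s₃² = 1 and solves the 1+2 dimensional Landau–Lifshitz equation s_t = s × (∂_x² + ∂_y²)s. -/
open Real

/-- The travelling 1-soliton of the 1+2 dimensional Landau–Lifshitz equation. -/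
noncomputable def soliton (δ : ℝ) (x y t : ℝ) : Fin 3 → ℝ :=
  ![2 * Real.sinh (Real.cos δ * x + Real.sin δ * y) /
      (Real.cosh (Real.cos δ * x + Real.sin δ * y)) ^ 2 * Real.cos t,
    2 * Real.sinh (Real.cos δ * x + Real.sin δ * y) /
      (Real.cosh (Real.cos δ * x + Real.sin δ * y)) ^ 2 * Real.sin t,
    1 - 2 / (Real.cosh (Real.cos δ * x + Real.sin δ * y)) ^ 2]

namespace SolitonAux

noncomputable def F (w : ℝ) : ℝ := 2 * Real.sinh w / Real.cosh w ^ 2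
noncomputable def F1 (w : ℝ) : ℝ := 2 * (1 - Real.sinh w ^ 2) / Real.cosh w ^ 3
noncomputable def F2 (w : ℝ) : ℝ := 2 * Real.sinh w * (Real.cosh w ^ 2 - 6) / Real.cosh w ^ 4
noncomputable def G (w : ℝ) : ℝ := 1 - 2 / Real.cosh w ^ 2
noncomputable def G1 (w : ℝ) : ℝ := 4 * Real.sinh w / Real.cosh w ^ 3
noncomputable def G2 (w : ℝ) : ℝ := 4 * (3 - 2 * Real.cosh w ^ 2) / Real.cosh w ^ 4

lemma cosh_ne (w : ℝ) : Real.cosh w ≠ 0 := (Real.cosh_pos w).ne'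

lemma hF (w : ℝ) : HasDerivAt F (F1 w) w := by
  have h := ((Real.hasDerivAt_sinh w).const_mul 2).div
    ((Real.hasDerivAt_cosh w).pow 2) (pow_ne_zero 2 (cosh_ne w))
  refine h.congr_deriv (Eq.symm ?_)
  have hc := Real.cosh_sq w
  have := cosh_ne w
  simp only [F1, Pi.pow_apply]
  field_simp
  ring_nf
  linear_combination (-(Real.cosh w)) * hc

lemma hF1 (w : ℝ) : HasDerivAt F1 (F2 w) w := by
  have hs : HasDerivAt (fun w => 2 * (1 - Real.sinh w ^ 2))
      (2 * (0 - 2 * Real.sinh w ^ 1 * Real.cosh w)) w :=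
    ((hasDerivAt_const w (1:ℝ)).sub ((Real.hasDerivAt_sinh w).pow 2)).const_mul 2
  have h := hs.div ((Real.hasDerivAt_cosh w).pow 3) (pow_ne_zero 3 (cosh_ne w))
  refine h.congr_deriv (Eq.symm ?_)
  have hc := Real.cosh_sq w
  have := cosh_ne w
  simp only [F2, Pi.pow_apply]
  field_simp
  ring_nf
  linear_combination (3 * Real.sinh w * Real.cosh w ^ 2) * hc

lemma hG (w : ℝ) : HasDerivAt G (G1 w) w := by
  have h := ((hasDerivAt_const w (2:ℝ)).div ((Real.hasDerivAt_cosh w).pow 2)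
    (pow_ne_zero 2 (cosh_ne w)))
  have h2 : HasDerivAt G (0 - (0 * Real.cosh w ^ 2 - 2 * (2 * Real.cosh w ^ 1 * Real.sinh w)) / (Real.cosh w ^ 2) ^ 2) w :=
    (hasDerivAt_const w (1:ℝ)).sub h
  convert h2 using 1
  have := cosh_ne w
  unfold G1
  field_simp
  ring

lemma hG1 (w : ℝ) : HasDerivAt G1 (G2 w) w := by
  have h := ((Real.hasDerivAt_sinh w).const_mul 4).div
    ((Real.hasDerivAt_cosh w).pow 3) (pow_ne_zero 3 (cosh_ne w))
  refine h.congr_deriv (Eq.symm ?_)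
  have hc := Real.cosh_sq w
  have := cosh_ne w
  simp only [G2, Pi.pow_apply]
  field_simp
  ring_nf
  linear_combination (-(3 * Real.cosh w ^ 2)) * hc

/-- derivative of composition with affine map -/
lemma comp_affine {f f' : ℝ → ℝ} (hf : ∀ w, HasDerivAt f (f' w) w) (a b u : ℝ) :
    HasDerivAt (fun v => f (a * v + b)) (a * f' (a * u + b)) u := by
  have hl : HasDerivAt (fun v : ℝ => a * v + b) a u := by
    simpa using ((hasDerivAt_id u).const_mul a).add_const b
  have := (hf (a * u + b)).comp u hl
  have e : (fun v => f (a * v + b)) = f ∘ (fun v => a * v + b) := rfl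
  rw [e, mul_comm]
  exact this

lemma FG_norm (w : ℝ) : F w ^ 2 + G w ^ 2 = 1 := by
  have hc := Real.cosh_sq w
  have := cosh_ne w
  unfold F G
  field_simp
  ring_nf
  linear_combination (-4 : ℝ) * hc

lemma key (w : ℝ) : G w * F2 w - F w * G2 w = F w := by
  have hc := Real.cosh_sq w
  have := cosh_ne w
  unfold F G F2 G2
  field_simp
  ring

end SolitonAux

open SolitonAux in
/-- The travelling 1-soliton takes values in `S²` and solves the 1+2 dimensional
Landau–Lifshitz equation `s_t = s × (∂_x² + ∂_y²) s`. -/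
theorem stmt2 (δ : ℝ) :
    ∀ x y t : ℝ,
      ((soliton δ x y t 0) ^ 2 + (soliton δ x y t 1) ^ 2 + (soliton δ x y t 2) ^ 2 = 1) ∧
      ((fun i => deriv (fun t' => soliton δ x y t' i) t) =
        crossProduct (soliton δ x y t)
          (fun i => deriv (fun x' => deriv (fun x'' => soliton δ x'' y t i) x') x
                  + deriv (fun y' => deriv (fun y'' => soliton δ x y'' t i) y') y)) := by
  intro x y t
  set a := Real.cos δ with ha
  set b := Real.sin δ with hb
  have hab : a ^ 2 + b ^ 2 = 1 := by
    rw [ha, hb]; rw [add_comm]; exact Real.sin_sq_add_cos_sq δ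
  set w := a * x + b * y with hw
  -- component formulas
  have s0 : ∀ x' y' t', soliton δ x' y' t' 0 = F (a * x' + b * y') * Real.cos t' := by
    intro x' y' t'; simp [soliton, F, ha, hb]
  have s1 : ∀ x' y' t', soliton δ x' y' t' 1 = F (a * x' + b * y') * Real.sin t' := by
    intro x' y' t'; simp [soliton, F, ha, hb]
  have s2 : ∀ x' y' t', soliton δ x' y' t' 2 = G (a * x' + b * y') := by
    intro x' y' t'; simp [soliton, G, ha, hb]
  constructor
  · rw [s0, s1, s2]
    have := FG_norm w
    nlinarith [Real.sin_sq_add_cos_sq t]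
  -- time derivatives
  have dt0 : deriv (fun t' => soliton δ x y t' 0) t = F w * (-Real.sin t) := by
    have : (fun t' => soliton δ x y t' 0) = fun t' => F w * Real.cos t' := by
      funext t'; exact s0 x y t'
    rw [this]
    exact ((Real.hasDerivAt_cos t).const_mul (F w)).deriv
  have dt1 : deriv (fun t' => soliton δ x y t' 1) t = F w * Real.cos t := by
    have : (fun t' => soliton δ x y t' 1) = fun t' => F w * Real.sin t' := by
      funext t'; exact s1 x y t'
    rw [this]
    exact ((Real.hasDerivAt_sin t).const_mul (F w)).deriv
  have dt2 : deriv (fun t' => soliton δ x y t' 2) t = 0 := by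
    have : (fun t' => soliton δ x y t' 2) = fun _ => G w := by
      funext t'; exact s2 x y t'
    rw [this]; exact deriv_const t (G w)
  -- generic second-derivative helper
  have second : ∀ (f f1 f2 : ℝ → ℝ), (∀ u, HasDerivAt f (f1 u) u) →
      (∀ u, HasDerivAt f1 (f2 u) u) → ∀ (c d k u : ℝ),
      deriv (fun v => deriv (fun v' => f (c * v' + d) * k) v) u
        = c ^ 2 * f2 (c * u + d) * k := by
    intro f f1 f2 hf hf1 c d k u
    have h1 : (fun v => deriv (fun v' => f (c * v' + d) * k) v)
        = fun v => c * f1 (c * v + d) * k := by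
      funext v
      exact ((comp_affine hf c d v).mul_const k).deriv
    rw [h1, (((comp_affine hf1 c d u).const_mul c).mul_const k).deriv]
    ring
  -- second derivatives of each component
  have dxx0 : deriv (fun x' => deriv (fun x'' => soliton δ x'' y t 0) x') x
      = a ^ 2 * F2 w * Real.cos t := by
    have e : (fun x'' => soliton δ x'' y t 0) = fun x'' => F (a * x'' + b * y) * Real.cos t := by
      funext u; exact s0 u y t
    rw [e, second F F1 F2 hF hF1 a (b * y) (Real.cos t) x]
  have dyy0 : deriv (fun y' => deriv (fun y'' => soliton δ x y'' t 0) y') y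
      = b ^ 2 * F2 w * Real.cos t := by
    have e : (fun y'' => soliton δ x y'' t 0) = fun y'' => F (b * y'' + a * x) * Real.cos t := by
      funext u; rw [s0 x u t, add_comm (a * x)]
    rw [e, second F F1 F2 hF hF1 b (a * x) (Real.cos t) y, hw, add_comm (a * x)]
  have dxx1 : deriv (fun x' => deriv (fun x'' => soliton δ x'' y t 1) x') x
      = a ^ 2 * F2 w * Real.sin t := by
    have e : (fun x'' => soliton δ x'' y t 1) = fun x'' => F (a * x'' + b * y) * Real.sin t := by
      funext u; exact s1 u y t
    rw [e, second F F1 F2 hF hF1 a (b * y) (Real.sin t) x]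
  have dyy1 : deriv (fun y' => deriv (fun y'' => soliton δ x y'' t 1) y') y
      = b ^ 2 * F2 w * Real.sin t := by
    have e : (fun y'' => soliton δ x y'' t 1) = fun y'' => F (b * y'' + a * x) * Real.sin t := by
      funext u; rw [s1 x u t, add_comm (a * x)]
    rw [e, second F F1 F2 hF hF1 b (a * x) (Real.sin t) y, hw, add_comm (a * x)]
  have dxx2 : deriv (fun x' => deriv (fun x'' => soliton δ x'' y t 2) x') x
      = a ^ 2 * G2 w * 1 := by
    have e : (fun x'' => soliton δ x'' y t 2) = fun x'' => G (a * x'' + b * y) * 1 := by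
      funext u; rw [s2 u y t, mul_one]
    rw [e, second G G1 G2 hG hG1 a (b * y) 1 x]
  have dyy2 : deriv (fun y' => deriv (fun y'' => soliton δ x y'' t 2) y') y
      = b ^ 2 * G2 w * 1 := by
    have e : (fun y'' => soliton δ x y'' t 2) = fun y'' => G (b * y'' + a * x) * 1 := by
      funext u; rw [s2 x u t, mul_one, add_comm (a * x)]
    rw [e, second G G1 G2 hG hG1 b (a * x) 1 y, hw, add_comm (a * x)]
  funext i
  rw [cross_apply]
  fin_cases i
  · simp only [Fin.zero_eta, Matrix.cons_val_zero]
    rw [dt0, dxx1, dyy1, dxx2, dyy2, s1 x y t, s2 x y t, hw]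
    linear_combination ((G (a*x+b*y) * F2 (a*x+b*y) - F (a*x+b*y) * G2 (a*x+b*y)) * Real.sin t) * hab
      + Real.sin t * key (a*x+b*y)
  · simp only [Fin.mk_one, Matrix.cons_val_one, Matrix.head_cons, Matrix.cons_val_zero]
    rw [dt1, dxx0, dyy0, dxx2, dyy2, s0 x y t, s2 x y t, hw]
    linear_combination (-(G (a*x+b*y) * F2 (a*x+b*y) - F (a*x+b*y) * G2 (a*x+b*y)) * Real.cos t) * hab
      + (-Real.cos t) * key (a*x+b*y)
  · simp only [Fin.reduceFinMk, Matrix.cons_val_two, Matrix.tail_cons, Matrix.head_cons]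
    rw [dt2, dxx0, dyy0, dxx1, dyy1, s0 x y t, s1 x y t, hw]
    ring
end

section
/- Let G : ℝ³ → SU(2) satisfy G_z = −GU, G_{z̄} = GP with U, P as above, set S = −G σ₃ G⁻¹ and α = p̄. Then S S_{z̄} + 2 α S = −2 G_{z̄} G⁻¹. -/
open Complex Matrix

/-- `∂_z = ∂_x − i ∂_y` acting entrywise on matrix fields over `(t,x,y)`. -/
noncomputable def MDz (F : ℝ → ℝ → ℝ → Matrix (Fin 2) (Fin 2) ℂ) (t x y : ℝ) :
    Matrix (Fin 2) (Fin 2) ℂ :=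
  Matrix.of fun i j =>
    deriv (fun x' => F t x' y i j) x - I * deriv (fun y' => F t x y' i j) y

/-- `∂_{z̄} = ∂_x + i ∂_y` acting entrywise on matrix fields over `(t,x,y)`. -/
noncomputable def MDzb (F : ℝ → ℝ → ℝ → Matrix (Fin 2) (Fin 2) ℂ) (t x y : ℝ) :
    Matrix (Fin 2) (Fin 2) ℂ :=
  Matrix.of fun i j =>
    deriv (fun x' => F t x' y i j) x + I * deriv (fun y' => F t x y' i j) y

/-- `∂_z = ∂_x − i ∂_y` on scalar fields over `(t,x,y)`. -/
noncomputable def sDz (f : ℝ → ℝ → ℝ → ℂ) (t x y : ℝ) : ℂ :=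
  deriv (fun x' => f t x' y) x - I * deriv (fun y' => f t x y') y

/-- `∂_{z̄} = ∂_x + i ∂_y` on scalar fields over `(t,x,y)`. -/
noncomputable def sDzb (f : ℝ → ℝ → ℝ → ℂ) (t x y : ℝ) : ℂ :=
  deriv (fun x' => f t x' y) x + I * deriv (fun y' => f t x y') y

/-- The Pauli matrix `σ₃ = diag(1,−1)`. -/
def sigma3 : Matrix (Fin 2) (Fin 2) ℂ := !![1, 0; 0, -1]

/-- `U = [[p,q],[r,−p]]`. -/
def Umat (p q r : ℝ → ℝ → ℝ → ℂ) (t x y : ℝ) : Matrix (Fin 2) (Fin 2) ℂ :=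
  !![p t x y, q t x y; r t x y, -p t x y]

/-- `P = [[p̄,r̄],[q̄,−p̄]]`. -/
def Pmat (p q r : ℝ → ℝ → ℝ → ℂ) (t x y : ℝ) : Matrix (Fin 2) (Fin 2) ℂ :=
  !![(starRingEnd ℂ) (p t x y), (starRingEnd ℂ) (r t x y);
     (starRingEnd ℂ) (q t x y), -(starRingEnd ℂ) (p t x y)]

lemma diffAt_x (f : ℝ → ℝ → ℝ → ℂ)
    (hf : ContDiff ℝ (⊤ : ℕ∞) fun X : ℝ × ℝ × ℝ => f X.1 X.2.1 X.2.2) (t x y : ℝ) :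
    DifferentiableAt ℝ (fun x' => f t x' y) x := by
  have h : (fun x' => f t x' y)
      = (fun X : ℝ × ℝ × ℝ => f X.1 X.2.1 X.2.2) ∘ (fun x' => (t, x', y)) := rfl
  rw [h]
  exact ((hf.differentiable (by simp)).comp (by fun_prop)).differentiableAt

lemma diffAt_y (f : ℝ → ℝ → ℝ → ℂ)
    (hf : ContDiff ℝ (⊤ : ℕ∞) fun X : ℝ × ℝ × ℝ => f X.1 X.2.1 X.2.2) (t x y : ℝ) :
    DifferentiableAt ℝ (fun y' => f t x y') y := by
  have h : (fun y' => f t x y')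
      = (fun X : ℝ × ℝ × ℝ => f X.1 X.2.1 X.2.2) ∘ (fun y' => (t, x, y')) := rfl
  rw [h]
  exact ((hf.differentiable (by simp)).comp (by fun_prop)).differentiableAt

lemma MDzb_mul (A B : ℝ → ℝ → ℝ → Matrix (Fin 2) (Fin 2) ℂ) (t x y : ℝ)
    (hAx : ∀ i j, DifferentiableAt ℝ (fun x' => A t x' y i j) x)
    (hAy : ∀ i j, DifferentiableAt ℝ (fun y' => A t x y' i j) y)
    (hBx : ∀ i j, DifferentiableAt ℝ (fun x' => B t x' y i j) x)
    (hBy : ∀ i j, DifferentiableAt ℝ (fun y' => B t x y' i j) y) :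
    MDzb (fun t x y => A t x y * B t x y) t x y
      = MDzb A t x y * B t x y + A t x y * MDzb B t x y := by
  ext i j
  have hx : HasDerivAt (fun x' => A t x' y i 0 * B t x' y 0 j + A t x' y i 1 * B t x' y 1 j)
      ((deriv (fun x' => A t x' y i 0) x * B t x y 0 j
        + A t x y i 0 * deriv (fun x' => B t x' y 0 j) x)
       + (deriv (fun x' => A t x' y i 1) x * B t x y 1 j
        + A t x y i 1 * deriv (fun x' => B t x' y 1 j) x)) x :=
    (((hAx i 0).hasDerivAt.mul (hBx 0 j).hasDerivAt).add
      ((hAx i 1).hasDerivAt.mul (hBx 1 j).hasDerivAt))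
  have hy : HasDerivAt (fun y' => A t x y' i 0 * B t x y' 0 j + A t x y' i 1 * B t x y' 1 j)
      ((deriv (fun y' => A t x y' i 0) y * B t x y 0 j
        + A t x y i 0 * deriv (fun y' => B t x y' 0 j) y)
       + (deriv (fun y' => A t x y' i 1) y * B t x y 1 j
        + A t x y i 1 * deriv (fun y' => B t x y' 1 j) y)) y :=
    (((hAy i 0).hasDerivAt.mul (hBy 0 j).hasDerivAt).add
      ((hAy i 1).hasDerivAt.mul (hBy 1 j).hasDerivAt))
  simp only [MDzb, Matrix.of_apply, Matrix.add_apply, Matrix.mul_apply, Fin.sum_univ_two]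
  rw [hx.deriv, hy.deriv]
  ring

lemma MDzb_neg (F : ℝ → ℝ → ℝ → Matrix (Fin 2) (Fin 2) ℂ) (t x y : ℝ) :
    MDzb (fun t x y => -(F t x y)) t x y = -(MDzb F t x y) := by
  ext i j
  simp only [MDzb, Matrix.of_apply, Matrix.neg_apply]
  rw [deriv.fun_neg, deriv.fun_neg]
  ring


/-- With `S = −G σ₃ G⁻¹` and `α = p̄` one has `S S_{z̄} + 2 α S = −2 G_{z̄} G⁻¹`. -/
theorem stmt7 (G : ℝ → ℝ → ℝ → Matrix (Fin 2) (Fin 2) ℂ) (p q r : ℝ → ℝ → ℝ → ℂ)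
    (hGsm : ∀ i j, ContDiff ℝ (⊤ : ℕ∞) (fun X : ℝ × ℝ × ℝ => G X.1 X.2.1 X.2.2 i j))
    (hpsm : ContDiff ℝ (⊤ : ℕ∞) (fun X : ℝ × ℝ × ℝ => p X.1 X.2.1 X.2.2))
    (hqsm : ContDiff ℝ (⊤ : ℕ∞) (fun X : ℝ × ℝ × ℝ => q X.1 X.2.1 X.2.2))
    (hrsm : ContDiff ℝ (⊤ : ℕ∞) (fun X : ℝ × ℝ × ℝ => r X.1 X.2.1 X.2.2))
    (hSU : ∀ t x y, G t x y ∈ Matrix.specialUnitaryGroup (Fin 2) ℂ)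
    (hGz : ∀ t x y, MDz G t x y = -(G t x y * Umat p q r t x y))
    (hGzb : ∀ t x y, MDzb G t x y = G t x y * Pmat p q r t x y)
    (S : ℝ → ℝ → ℝ → Matrix (Fin 2) (Fin 2) ℂ)
    (hS : ∀ t x y, S t x y = -(G t x y * sigma3 * (G t x y)⁻¹)) :
    ∀ t x y,
      S t x y * MDzb S t x y + (2 * (starRingEnd ℂ) (p t x y)) • S t x y =
        (-2 : ℂ) • (MDzb G t x y * (G t x y)⁻¹) := by
  -- determinant 1
  have hdet : ∀ t x y, (G t x y).det = 1 := fun t x y =>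
    ((Matrix.mem_specialUnitaryGroup_iff).mp (hSU t x y)).2
  -- explicit inverse
  set H : ℝ → ℝ → ℝ → Matrix (Fin 2) (Fin 2) ℂ := fun t x y =>
    !![G t x y 1 1, -(G t x y 0 1); -(G t x y 1 0), G t x y 0 0] with hHdef
  have hH : ∀ t x y, (G t x y)⁻¹ = H t x y := by
    intro t x y
    rw [Matrix.inv_def, hdet, Matrix.adjugate_fin_two]
    simp
    rfl
  have hGH : ∀ t x y, G t x y * H t x y = 1 := by
    intro t x y
    rw [← hH]
    exact Matrix.mul_nonsing_inv _ (by rw [hdet]; exact isUnit_one)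
  have hHG : ∀ t x y, H t x y * G t x y = 1 := by
    intro t x y
    rw [← hH]
    exact Matrix.nonsing_inv_mul _ (by rw [hdet]; exact isUnit_one)
  intro t x y
  -- differentiability of entries
  have hGx : ∀ i j, DifferentiableAt ℝ (fun x' => G t x' y i j) x :=
    fun i j => diffAt_x (fun a b c => G a b c i j) (hGsm i j) t x y
  have hGy : ∀ i j, DifferentiableAt ℝ (fun y' => G t x y' i j) y :=
    fun i j => diffAt_y (fun a b c => G a b c i j) (hGsm i j) t x y
  have hHx : ∀ i j, DifferentiableAt ℝ (fun x' => H t x' y i j) x := by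
    intro i j
    fin_cases i <;> fin_cases j <;>
      simp only [hHdef, Matrix.cons_val', Matrix.cons_val_zero, Matrix.cons_val_one,
        Matrix.head_cons, Matrix.head_fin_const, Matrix.empty_val', Matrix.cons_val_fin_one]
    · exact hGx 1 1
    · exact (hGx 0 1).neg
    · exact (hGx 1 0).neg
    · exact hGx 0 0
  have hHy : ∀ i j, DifferentiableAt ℝ (fun y' => H t x y' i j) y := by
    intro i j
    fin_cases i <;> fin_cases j <;>
      simp only [hHdef, Matrix.cons_val', Matrix.cons_val_zero, Matrix.cons_val_one,
        Matrix.head_cons, Matrix.head_fin_const, Matrix.empty_val', Matrix.cons_val_fin_one]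
    · exact hGy 1 1
    · exact (hGy 0 1).neg
    · exact (hGy 1 0).neg
    · exact hGy 0 0
  -- derivative of H
  have hone : MDzb (fun t x y => G t x y * H t x y) t x y = 0 := by
    have h1 : (fun t x y => G t x y * H t x y)
        = fun _ _ _ => (1 : Matrix (Fin 2) (Fin 2) ℂ) := by
      funext a b c; exact hGH a b c
    rw [h1]
    ext i j
    simp [MDzb]
  have hleib := MDzb_mul G H t x y hGx hGy hHx hHy
  rw [hone] at hleib
  have hMH : MDzb H t x y = -(Pmat p q r t x y * H t x y) := by
    have h2 : G t x y * MDzb H t x y = -(MDzb G t x y * H t x y) := by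
      linear_combination (norm := abel) -hleib
    have h3 := congrArg (fun M => H t x y * M) h2
    simp only [← Matrix.mul_assoc, hHG, Matrix.one_mul, Matrix.mul_neg] at h3
    rw [h3, hGzb, ← Matrix.mul_assoc, hHG, Matrix.one_mul]
  -- derivative of S
  have hSfun : S = fun t x y => -((fun t x y => G t x y * sigma3) t x y * H t x y) := by
    funext a b c
    rw [hS, hH, Matrix.mul_assoc]
  have hAx : ∀ i j, DifferentiableAt ℝ (fun x' => (G t x' y * sigma3) i j) x := by
    intro i j
    simp only [Matrix.mul_apply, Fin.sum_univ_two]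
    exact ((hGx i 0).mul (differentiableAt_const _)).add ((hGx i 1).mul (differentiableAt_const _))
  have hAy : ∀ i j, DifferentiableAt ℝ (fun y' => (G t x y' * sigma3) i j) y := by
    intro i j
    simp only [Matrix.mul_apply, Fin.sum_univ_two]
    exact ((hGy i 0).mul (differentiableAt_const _)).add ((hGy i 1).mul (differentiableAt_const _))
  have hMA : MDzb (fun t x y => G t x y * sigma3) t x y = MDzb G t x y * sigma3 := by
    rw [MDzb_mul G (fun _ _ _ => sigma3) t x y hGx hGy
      (fun i j => differentiableAt_const _) (fun i j => differentiableAt_const _)]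
    have : MDzb (fun _ _ _ => sigma3) t x y = 0 := by ext i j; simp [MDzb]
    rw [this, Matrix.mul_zero, add_zero]
  have hMS : MDzb S t x y
      = -(G t x y * Pmat p q r t x y * sigma3 * H t x y
          - G t x y * sigma3 * (Pmat p q r t x y * H t x y)) := by
    rw [hSfun, MDzb_neg, MDzb_mul _ H t x y hAx hAy hHx hHy, hMA, hMH, hGzb]
    rw [Matrix.mul_neg]
    abel_nf
  -- now pure matrix algebra
  set g := G t x y
  set h := H t x y
  set Pm := Pmat p q r t x y
  set c := (starRingEnd ℂ) (p t x y)
  have hsig : sigma3 * Pm * sigma3 = (2 * c) • sigma3 - Pm := by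
    ext i j
    fin_cases i <;> fin_cases j <;>
      simp [sigma3, Pmat, Pm, c, Matrix.mul_apply, Fin.sum_univ_two] <;> try ring
  have hsig2 : sigma3 * sigma3 = (1 : Matrix (Fin 2) (Fin 2) ℂ) := by
    ext i j
    fin_cases i <;> fin_cases j <;>
      simp [sigma3, Matrix.mul_apply, Fin.sum_univ_two]
  have hS' : S t x y = -(g * sigma3 * h) := by rw [hS, hH]
  rw [hS', hMS, hGzb, hH]
  have hgh : g * h = 1 := hGH t x y
  have hhg : h * g = 1 := hHG t x y
  have hg1 : ∀ X : Matrix (Fin 2) (Fin 2) ℂ, h * (g * X) = X := by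
    intro X; rw [← Matrix.mul_assoc, hhg, Matrix.one_mul]
  have hsg : ∀ X : Matrix (Fin 2) (Fin 2) ℂ, sigma3 * (sigma3 * X) = X := by
    intro X; rw [← Matrix.mul_assoc, hsig2, Matrix.one_mul]
  have key : g * sigma3 * h * (g * Pm * sigma3 * h - g * sigma3 * (Pm * h))
      = (2 * c) • (g * sigma3 * h) - (2 : ℂ) • (g * Pm * h) := by
    rw [Matrix.mul_sub]
    have e1 : g * sigma3 * h * (g * Pm * sigma3 * h) = g * (sigma3 * Pm * sigma3) * h := by
      simp only [Matrix.mul_assoc, hg1]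
    have e2 : g * sigma3 * h * (g * sigma3 * (Pm * h)) = g * Pm * h := by
      simp only [Matrix.mul_assoc, hg1, hsg]
    rw [e1, e2, hsig]
    rw [Matrix.mul_sub, Matrix.sub_mul]
    rw [Matrix.mul_smul, Matrix.smul_mul]
    have : (2 : ℂ) • (g * Pm * h) = g * Pm * h + g * Pm * h := by
      rw [two_smul]
    rw [this]
    simp only [Matrix.mul_assoc]
    abel
  rw [Matrix.mul_neg, Matrix.neg_mul, neg_neg, key]
  have : (-2 : ℂ) • (g * Pm * h) = -((2:ℂ) • (g * Pm * h)) := by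
    rw [neg_smul]
  rw [this]
  rw [smul_neg]
  abel
end

section
/- Let G : ℝ³ → SU(2) satisfy G_z = −GU, G_{z̄} = GP with U = [[p,q],[r,−p]], P = [[p̄,r̄],[q̄,−p̄]], and suppose the constraint p̄_z + p_{z̄} = |q|² − |r|² holds. Set S = −G σ₃ G⁻¹ and α = p̄. Then (1/2)[S_z, S_{z̄}] + 2(α S)_z = G (2 p_{z̄} σ₃ + [σ₃, Q]) G⁻¹, where Q = [[0, −2 q p̄],[−2 r p̄, 0]]. -/
open Complex Matrix

noncomputable def MD (c : ℂ) (F : ℝ → ℝ → ℝ → Matrix (Fin 2) (Fin 2) ℂ) (t x y : ℝ) :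
    Matrix (Fin 2) (Fin 2) ℂ :=
  Matrix.of fun i j =>
    deriv (fun x' => F t x' y i j) x + c * deriv (fun y' => F t x y' i j) y

noncomputable def sD (c : ℂ) (f : ℝ → ℝ → ℝ → ℂ) (t x y : ℝ) : ℂ :=
  deriv (fun x' => f t x' y) x + c * deriv (fun y' => f t x y') y

def Sm (F : ℝ → ℝ → ℝ → Matrix (Fin 2) (Fin 2) ℂ) : Prop :=
  ∀ i j, ContDiff ℝ (⊤ : ℕ∞) (fun X : ℝ × ℝ × ℝ => F X.1 X.2.1 X.2.2 i j)

def sSm (f : ℝ → ℝ → ℝ → ℂ) : Prop :=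
  ContDiff ℝ (⊤ : ℕ∞) (fun X : ℝ × ℝ × ℝ => f X.1 X.2.1 X.2.2)

lemma sSm.diffx {f : ℝ → ℝ → ℝ → ℂ} (hf : sSm f) (t x y : ℝ) :
    DifferentiableAt ℝ (fun x' => f t x' y) x := by
  have h1 : Differentiable ℝ (fun X : ℝ × ℝ × ℝ => f X.1 X.2.1 X.2.2) := hf.differentiable (by simp)
  have h2 : Differentiable ℝ (fun x' : ℝ => ((t, x', y) : ℝ × ℝ × ℝ)) := by fun_prop
  exact (h1.comp h2).differentiableAt

lemma sSm.diffy {f : ℝ → ℝ → ℝ → ℂ} (hf : sSm f) (t x y : ℝ) :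
    DifferentiableAt ℝ (fun y' => f t x y') y := by
  have h1 : Differentiable ℝ (fun X : ℝ × ℝ × ℝ => f X.1 X.2.1 X.2.2) := hf.differentiable (by simp)
  have h2 : Differentiable ℝ (fun y' : ℝ => ((t, x, y') : ℝ × ℝ × ℝ)) := by fun_prop
  exact (h1.comp h2).differentiableAt


lemma Sm.diffx {F : ℝ → ℝ → ℝ → Matrix (Fin 2) (Fin 2) ℂ} (hF : Sm F) (i j : Fin 2)
    (t x y : ℝ) : DifferentiableAt ℝ (fun x' => F t x' y i j) x := by
  have h1 : Differentiable ℝ (fun X : ℝ × ℝ × ℝ => F X.1 X.2.1 X.2.2 i j) :=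
    (hF i j).differentiable (by simp)
  have h2 : Differentiable ℝ (fun x' : ℝ => ((t, x', y) : ℝ × ℝ × ℝ)) := by fun_prop
  exact (h1.comp h2).differentiableAt

lemma Sm.diffy {F : ℝ → ℝ → ℝ → Matrix (Fin 2) (Fin 2) ℂ} (hF : Sm F) (i j : Fin 2)
    (t x y : ℝ) : DifferentiableAt ℝ (fun y' => F t x y' i j) y := by
  have h1 : Differentiable ℝ (fun X : ℝ × ℝ × ℝ => F X.1 X.2.1 X.2.2 i j) :=
    (hF i j).differentiable (by simp)
  have h2 : Differentiable ℝ (fun y' : ℝ => ((t, x, y') : ℝ × ℝ × ℝ)) := by fun_prop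
  exact (h1.comp h2).differentiableAt

lemma Sm.mul {F K : ℝ → ℝ → ℝ → Matrix (Fin 2) (Fin 2) ℂ} (hF : Sm F) (hK : Sm K) :
    Sm (fun t x y => F t x y * K t x y) := by
  intro i j
  have : (fun X : ℝ × ℝ × ℝ => (F X.1 X.2.1 X.2.2 * K X.1 X.2.1 X.2.2) i j)
      = fun X : ℝ × ℝ × ℝ => F X.1 X.2.1 X.2.2 i 0 * K X.1 X.2.1 X.2.2 0 j
        + F X.1 X.2.1 X.2.2 i 1 * K X.1 X.2.1 X.2.2 1 j := by
    funext X; simp [Matrix.mul_apply, Fin.sum_univ_two]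
  rw [this]
  exact ((hF i 0).mul (hK 0 j)).add ((hF i 1).mul (hK 1 j))

lemma Sm.neg {F : ℝ → ℝ → ℝ → Matrix (Fin 2) (Fin 2) ℂ} (hF : Sm F) :
    Sm (fun t x y => -F t x y) := fun i j => by
  have : (fun X : ℝ × ℝ × ℝ => (-F X.1 X.2.1 X.2.2) i j)
      = fun X : ℝ × ℝ × ℝ => -(F X.1 X.2.1 X.2.2 i j) := rfl
  rw [this]; exact (hF i j).neg

lemma Sm.const (A : Matrix (Fin 2) (Fin 2) ℂ) : Sm (fun _ _ _ => A) :=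
  fun _ _ => contDiff_const

lemma MD_mul {F K : ℝ → ℝ → ℝ → Matrix (Fin 2) (Fin 2) ℂ} (hF : Sm F) (hK : Sm K)
    (c : ℂ) (t x y : ℝ) :
    MD c (fun t x y => F t x y * K t x y) t x y
      = MD c F t x y * K t x y + F t x y * MD c K t x y := by
  ext i j
  simp only [MD, Matrix.of_apply, Matrix.mul_apply, Fin.sum_univ_two, Matrix.add_apply]
  rw [deriv_fun_add ((hF.diffx i 0 t x y).fun_mul (hK.diffx 0 j t x y))
        ((hF.diffx i 1 t x y).fun_mul (hK.diffx 1 j t x y)),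
      deriv_fun_add ((hF.diffy i 0 t x y).fun_mul (hK.diffy 0 j t x y))
        ((hF.diffy i 1 t x y).fun_mul (hK.diffy 1 j t x y)),
      deriv_fun_mul (hF.diffx i 0 t x y) (hK.diffx 0 j t x y),
      deriv_fun_mul (hF.diffx i 1 t x y) (hK.diffx 1 j t x y),
      deriv_fun_mul (hF.diffy i 0 t x y) (hK.diffy 0 j t x y),
      deriv_fun_mul (hF.diffy i 1 t x y) (hK.diffy 1 j t x y)]
  ring

lemma MD_neg (F : ℝ → ℝ → ℝ → Matrix (Fin 2) (Fin 2) ℂ) (c : ℂ) (t x y : ℝ) :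
    MD c (fun t x y => -F t x y) t x y = -MD c F t x y := by
  ext i j
  simp only [MD, Matrix.of_apply, Matrix.neg_apply]
  rw [deriv.fun_neg, deriv.fun_neg]
  ring

lemma MD_const (A : Matrix (Fin 2) (Fin 2) ℂ) (c : ℂ) (t x y : ℝ) :
    MD c (fun _ _ _ => A) t x y = 0 := by
  ext i j
  simp [MD]

lemma MD_smul {f : ℝ → ℝ → ℝ → ℂ} {K : ℝ → ℝ → ℝ → Matrix (Fin 2) (Fin 2) ℂ}
    (hf : sSm f) (hK : Sm K) (c : ℂ) (t x y : ℝ) :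
    MD c (fun t x y => f t x y • K t x y) t x y
      = sD c f t x y • K t x y + f t x y • MD c K t x y := by
  ext i j
  simp only [MD, sD, Matrix.of_apply, Matrix.smul_apply, Matrix.add_apply, smul_eq_mul]
  rw [deriv_fun_mul (sSm.diffx hf t x y) (hK.diffx i j t x y),
      deriv_fun_mul (sSm.diffy hf t x y) (hK.diffy i j t x y)]
  ring

lemma MDz_eq (F : ℝ → ℝ → ℝ → Matrix (Fin 2) (Fin 2) ℂ) : MDz F = MD (-I) F := by
  funext t x y; ext i j; simp [MDz, MD]; ring

lemma MDzb_eq (F : ℝ → ℝ → ℝ → Matrix (Fin 2) (Fin 2) ℂ) : MDzb F = MD I F := by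
  funext t x y; ext i j; simp [MDzb, MD]

lemma sDz_eq (f : ℝ → ℝ → ℝ → ℂ) : sDz f = sD (-I) f := by
  funext t x y; simp [sDz, sD]; ring

lemma sDzb_eq (f : ℝ → ℝ → ℝ → ℂ) : sDzb f = sD I f := by
  funext t x y; simp [sDzb, sD]

def Hmat (G : ℝ → ℝ → ℝ → Matrix (Fin 2) (Fin 2) ℂ) (t x y : ℝ) :
    Matrix (Fin 2) (Fin 2) ℂ :=
  !![G t x y 1 1, -(G t x y 0 1); -(G t x y 1 0), G t x y 0 0]

lemma Sm.hmat {G : ℝ → ℝ → ℝ → Matrix (Fin 2) (Fin 2) ℂ} (hG : Sm G) : Sm (Hmat G) := by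
  intro i j
  fin_cases i <;> fin_cases j <;> simp only [Hmat, Matrix.cons_val', Matrix.cons_val_zero,
    Matrix.cons_val_one, Matrix.head_cons, Matrix.empty_val', Matrix.cons_val_fin_one,
    Matrix.head_fin_const, Fin.isValue, Fin.zero_eta, Fin.mk_one] <;>
  first
  | exact hG _ _
  | exact (hG _ _).neg

/-- `(1/2)[S_z, S_{z̄}] + 2(α S)_z = G (2 p_{z̄} σ₃ + [σ₃, Q]) G⁻¹` with `α = p̄` and
`Q = [[0, −2qp̄],[−2rp̄, 0]]`, given the first scalar constraint. -/
theorem stmt8 (G : ℝ → ℝ → ℝ → Matrix (Fin 2) (Fin 2) ℂ) (p q r : ℝ → ℝ → ℝ → ℂ)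
    (hGsm : ∀ i j, ContDiff ℝ (⊤ : ℕ∞) (fun X : ℝ × ℝ × ℝ => G X.1 X.2.1 X.2.2 i j))
    (hpsm : ContDiff ℝ (⊤ : ℕ∞) (fun X : ℝ × ℝ × ℝ => p X.1 X.2.1 X.2.2))
    (hqsm : ContDiff ℝ (⊤ : ℕ∞) (fun X : ℝ × ℝ × ℝ => q X.1 X.2.1 X.2.2))
    (hrsm : ContDiff ℝ (⊤ : ℕ∞) (fun X : ℝ × ℝ × ℝ => r X.1 X.2.1 X.2.2))
    (hSU : ∀ t x y, G t x y ∈ Matrix.specialUnitaryGroup (Fin 2) ℂ)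
    (hGz : ∀ t x y, MDz G t x y = -(G t x y * Umat p q r t x y))
    (hGzb : ∀ t x y, MDzb G t x y = G t x y * Pmat p q r t x y)
    (hconstr : ∀ t x y,
      sDz (fun t x y => (starRingEnd ℂ) (p t x y)) t x y + sDzb p t x y =
        ((‖q t x y‖ : ℝ) : ℂ) ^ 2 - ((‖r t x y‖ : ℝ) : ℂ) ^ 2)
    (S : ℝ → ℝ → ℝ → Matrix (Fin 2) (Fin 2) ℂ)
    (hS : ∀ t x y, S t x y = -(G t x y * sigma3 * (G t x y)⁻¹)) :
    ∀ t x y,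
      (1 / 2 : ℂ) • (MDz S t x y * MDzb S t x y - MDzb S t x y * MDz S t x y)
        + (2 : ℂ) • MDz (fun t x y => (starRingEnd ℂ) (p t x y) • S t x y) t x y =
      G t x y *
        ((2 * sDzb p t x y) • sigma3 +
          (sigma3 * !![0, -2 * q t x y * (starRingEnd ℂ) (p t x y);
                       -2 * r t x y * (starRingEnd ℂ) (p t x y), 0]
           - !![0, -2 * q t x y * (starRingEnd ℂ) (p t x y);
                -2 * r t x y * (starRingEnd ℂ) (p t x y), 0] * sigma3)) *
        (G t x y)⁻¹ := by
  have hG : Sm G := hGsm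
  have hH : Sm (Hmat G) := hG.hmat
  have hdet : ∀ t x y, (G t x y).det = 1 := fun t x y =>
    ((Matrix.mem_specialUnitaryGroup_iff).mp (hSU t x y)).2
  have hInv : ∀ t x y, (G t x y)⁻¹ = Hmat G t x y := by
    intro t x y
    rw [Matrix.inv_def, hdet, Matrix.adjugate_fin_two]
    simp [Hmat]
  have hGH : ∀ t x y, G t x y * Hmat G t x y = 1 := fun t x y => by
    rw [← hInv]; exact Matrix.mul_nonsing_inv _ (by rw [hdet]; exact isUnit_one)
  have hHG : ∀ t x y, Hmat G t x y * G t x y = 1 := fun t x y => by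
    rw [← hInv]; exact Matrix.nonsing_inv_mul _ (by rw [hdet]; exact isUnit_one)
  have hpc : sSm (fun t x y => (starRingEnd ℂ) (p t x y)) := by
    exact Complex.conjCLE.contDiff.comp hpsm
  have hSm3H : Sm (fun t x y => sigma3 * Hmat G t x y) := (Sm.const sigma3).mul hH
  have hSfun : S = fun t x y => -(G t x y * (sigma3 * Hmat G t x y)) := by
    funext a b c; rw [hS, hInv, mul_assoc]
  have hSsm : Sm S := by rw [hSfun]; exact (hG.mul hSm3H).neg
  -- derivative of H
  have hHd : ∀ (c : ℂ) t x y,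
      MD c G t x y * Hmat G t x y + G t x y * MD c (Hmat G) t x y = 0 := by
    intro c t x y
    have h1 : MD c (fun t x y => G t x y * Hmat G t x y) t x y = 0 := by
      have he : (fun t x y => G t x y * Hmat G t x y)
          = fun _ _ _ => (1 : Matrix (Fin 2) (Fin 2) ℂ) := by
        funext a b c'; exact hGH a b c'
      rw [he, MD_const]
    rw [MD_mul hG hH] at h1
    exact h1
  have hMDinv : ∀ (c : ℂ) t x y,
      MD c (Hmat G) t x y = -(Hmat G t x y * MD c G t x y * Hmat G t x y) := by
    intro c t x y
    have h3 := eq_neg_of_add_eq_zero_right (hHd c t x y)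
    calc MD c (Hmat G) t x y
        = (Hmat G t x y * G t x y) * MD c (Hmat G) t x y := by rw [hHG, one_mul]
      _ = Hmat G t x y * (G t x y * MD c (Hmat G) t x y) := by rw [mul_assoc]
      _ = Hmat G t x y * (-(MD c G t x y * Hmat G t x y)) := by rw [h3]
      _ = -(Hmat G t x y * MD c G t x y * Hmat G t x y) := by noncomm_ring
  intro t x y
  have hHz : MD (-I) (Hmat G) t x y
      = Umat p q r t x y * Hmat G t x y := by
    rw [hMDinv, ← MDz_eq, hGz]
    calc -(Hmat G t x y * -(G t x y * Umat p q r t x y) * Hmat G t x y)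
        = (Hmat G t x y * G t x y) * (Umat p q r t x y * Hmat G t x y) := by noncomm_ring
      _ = Umat p q r t x y * Hmat G t x y := by rw [hHG, one_mul]
  have hHzb : MD I (Hmat G) t x y
      = -(Pmat p q r t x y * Hmat G t x y) := by
    rw [hMDinv, ← MDzb_eq, hGzb]
    calc -(Hmat G t x y * (G t x y * Pmat p q r t x y) * Hmat G t x y)
        = -((Hmat G t x y * G t x y) * (Pmat p q r t x y * Hmat G t x y)) := by noncomm_ring
      _ = -(Pmat p q r t x y * Hmat G t x y) := by rw [hHG, one_mul]
  have hMDS : ∀ c : ℂ, MD c S t x y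
      = -(MD c G t x y * (sigma3 * Hmat G t x y)
          + G t x y * (sigma3 * MD c (Hmat G) t x y)) := by
    intro c
    conv_lhs => rw [hSfun]
    rw [MD_neg, MD_mul hG hSm3H, MD_mul (Sm.const sigma3) hH, MD_const, zero_mul, zero_add]
  have hSz : MDz S t x y
      = G t x y * (Umat p q r t x y * sigma3 - sigma3 * Umat p q r t x y) * Hmat G t x y := by
    rw [MDz_eq, hMDS, hHz, ← MDz_eq, hGz]
    noncomm_ring
  have hSzb : MDzb S t x y
      = G t x y * (sigma3 * Pmat p q r t x y - Pmat p q r t x y * sigma3)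
          * Hmat G t x y := by
    rw [MDzb_eq, hMDS, hHzb, ← MDzb_eq, hGzb]
    noncomm_ring
  have hsmul : MDz (fun t x y => (starRingEnd ℂ) (p t x y) • S t x y) t x y
      = sDz (fun t x y => (starRingEnd ℂ) (p t x y)) t x y • S t x y
        + (starRingEnd ℂ) (p t x y) • MDz S t x y := by
    rw [MDz_eq, MD_smul hpc hSsm, ← sDz_eq, ← MDz_eq]
  set α := (starRingEnd ℂ) (p t x y) with hα
  set αz := sDz (fun t x y => (starRingEnd ℂ) (p t x y)) t x y with hαz
  set A := Umat p q r t x y * sigma3 - sigma3 * Umat p q r t x y with hA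
  set B := sigma3 * Pmat p q r t x y - Pmat p q r t x y * sigma3 with hB
  have key : ∀ X Y : Matrix (Fin 2) (Fin 2) ℂ,
      (G t x y * X * Hmat G t x y) * (G t x y * Y * Hmat G t x y)
        = G t x y * (X * Y) * Hmat G t x y := by
    intro X Y
    calc (G t x y * X * Hmat G t x y) * (G t x y * Y * Hmat G t x y)
        = G t x y * X * (Hmat G t x y * G t x y) * Y * Hmat G t x y := by noncomm_ring
      _ = G t x y * (X * Y) * Hmat G t x y := by rw [hHG, mul_one]; noncomm_ring
  have hSval : S t x y = G t x y * (-sigma3) * Hmat G t x y := by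
    rw [hS, hInv]; noncomm_ring
  -- main scalar matrix identity
  have habs : ∀ z : ℂ, (((‖z‖ : ℝ)) : ℂ) ^ 2 = z * (starRingEnd ℂ) z := by
    intro z
    rw [Complex.mul_conj]
    norm_cast
    exact Complex.sq_norm z
  have hc : αz + sDzb p t x y
      = q t x y * (starRingEnd ℂ) (q t x y) - r t x y * (starRingEnd ℂ) (r t x y) := by
    rw [← habs, ← habs, hαz]
    exact hconstr t x y
  have claim : (1 / 2 : ℂ) • (A * B - B * A)
      + (2 : ℂ) • (αz • (-sigma3) + α • A)
      = (2 * sDzb p t x y) • sigma3 +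
          (sigma3 * !![0, -2 * q t x y * α; -2 * r t x y * α, 0]
           - !![0, -2 * q t x y * α; -2 * r t x y * α, 0] * sigma3) := by
    ext i j
    fin_cases i <;> fin_cases j <;>
      simp [hA, hB, hα, Umat, Pmat, sigma3, Matrix.mul_apply, Fin.sum_univ_two] <;>
      first
      | linear_combination (2 : ℂ) * hc
      | linear_combination (-2 : ℂ) * hc
      | ring
  -- assemble
  rw [hsmul, hSz, hSzb, key, key, hSval, hInv t x y, ← claim]
  simp only [Matrix.mul_add, Matrix.add_mul, Matrix.mul_sub, Matrix.sub_mul,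
    mul_smul_comm, smul_mul_assoc, smul_sub, smul_add, Matrix.mul_neg, Matrix.neg_mul,
    smul_neg, smul_smul, mul_assoc]
end
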